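/- arXiv:2301.13377 — 5 statements merged into one kernel-verified Lean document; each statement's English description precedes it below -/
import Mathlib

section
/- Let M be a module over a k-algebra R and let a finite group G act on M by R-module automorphisms. Write M_G = M/N where N = span_k{m - g(m) : g ∈ G, m ∈ M}. If {m_i : i ∈ I} generates M as an R-module and {g_j : j ∈ J} generates G as a group, then the set {m_i - g_j(m_i), m_i - g_j^{-1}(m_i) : i ∈ I, j ∈ J} generates N as an R-module. -/
/-!
For fixed `s`, the map `u ↦ u - s • u` is `R`-linear, so it takes values in an `R`-submodule `N`
as soon as it does on the generators `mᵢ`; and the `s` for which `u - s • u ∈ N` for all `u` form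
a subgroup of `G`, so it is enough to check the `gⱼ`. Finally, the `k`-span of the elements
`u - s • u` is already an `R`-submodule because `r • (u - s • u) = r • u - s • (r • u)`.
-/

namespace Submodule

variable {k R M : Type*} [Semiring k] [Semiring R] [Module k R] [AddCommMonoid M] [Module R M]
  [Module k M] [IsScalarTower k R M]

open scoped Pointwise in
theorem span_eq_restrictScalars_span_of_smul_mem {s : Set M}
    (hs : ∀ (r : R) (x : M), x ∈ s → r • x ∈ s) :
    span k s = (span R s).restrictScalars k := by
  have univ_smul : (Set.univ : Set R) • s = s :=
    subset_antisymm (by rintro _ ⟨r, -, x, hx, rfl⟩; exact hs r x hx)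
      fun x hx ↦ ⟨1, trivial, x, hx, one_smul R x⟩
  calc span k s = span k ((Set.univ : Set R) • s) := by rw [univ_smul]
    _ = (span R s).restrictScalars k := span_smul_of_span_eq_top (span_univ (R := k)) s

end Submodule

section CoinvariantRelations

variable (G : Type*) {M : Type*} [Group G] [AddCommGroup M] [DistribMulAction G M]

/-- The kernel of the action of `G` on `M ⧸ N`; it makes sense even if `N` is not `G`-stable. -/
def AddSubgroup.actsTriviallyModSubgroup (N : AddSubgroup M) : Subgroup G where
  carrier := {s | ∀ u : M, u - s • u ∈ N}
  one_mem' u := by simp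
  mul_mem' {a b} ha hb u := by
    have h : u - (a * b) • u = (u - b • u) + (b • u - a • (b • u)) := by
      rw [mul_smul]; abel
    exact h ▸ add_mem (hb u) (ha (b • u))
  inv_mem' {a} ha u := by
    have h : u - a⁻¹ • u = -(a⁻¹ • u - a • (a⁻¹ • u)) := by
      rw [smul_inv_smul]; abel
    exact h ▸ neg_mem (ha (a⁻¹ • u))

variable {G}

theorem sub_smul_mem_of_closure_eq_top {J : Type*} {g : J → G}
    (hg : Subgroup.closure (Set.range g) = ⊤) {N : AddSubgroup M}
    (hN : ∀ j (u : M), u - g j • u ∈ N) (s : G) (u : M) : u - s • u ∈ N := by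
  have : Subgroup.closure (Set.range g) ≤ N.actsTriviallyModSubgroup G :=
    (Subgroup.closure_le _).2 (Set.range_subset_iff.2 hN)
  exact this (hg ▸ Subgroup.mem_top s) u

theorem sub_smul_mem_of_span_eq_top {R I : Type*} [Ring R] [Module R M] [SMulCommClass G R M]
    {m : I → M} (hm : Submodule.span R (Set.range m) = ⊤) {N : Submodule R M} {s : G}
    (hN : ∀ i, m i - s • m i ∈ N) (u : M) : u - s • u ∈ N := by
  let f : M →ₗ[R] M := LinearMap.id - DistribSMul.toLinearMap R M s
  have : Submodule.span R (Set.range m) ≤ N.comap f :=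
    Submodule.span_le.2 (Set.range_subset_iff.2 hN)
  exact (hm ▸ this) Submodule.mem_top

end CoinvariantRelations

theorem cofixed_relations_generators_general
    (k : Type*) [CommRing k] (R : Type*) [CommRing R] [Algebra k R]
    (M : Type*) [AddCommGroup M] [Module k M] [Module R M] [IsScalarTower k R M]
    (G : Type*) [Group G] [DistribMulAction G M]
    [SMulCommClass G R M]
    {I J : Type*} (m : I → M) (g : J → G)
    (hm : Submodule.span R (Set.range m) = ⊤)
    (hg : Subgroup.closure (Set.range g) = ⊤) :
    (Submodule.span R
        {x : M | ∃ i j, x = m i - g j • m i ∨ x = m i - (g j)⁻¹ • m i} : Set M) =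
    (Submodule.span k {x : M | ∃ (u : M) (s : G), x = u - s • u} : Set M) := by
  set S := {x : M | ∃ i j, x = m i - g j • m i ∨ x = m i - (g j)⁻¹ • m i}
  set T := {x : M | ∃ (u : M) (s : G), x = u - s • u}
  have T_smul_mem (r : R) (x : M) : x ∈ T → r • x ∈ T := by
    rintro ⟨u, s, rfl⟩
    exact ⟨r • u, s, by rw [smul_sub, smul_comm s r u]⟩
  have S_subset_T : S ⊆ T := by
    rintro _ ⟨i, j, h | h⟩
    exacts [⟨m i, g j, h⟩, ⟨m i, (g j)⁻¹, h⟩]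
  have T_subset_span_S : T ⊆ Submodule.span R S := by
    rintro _ ⟨u, s, rfl⟩
    refine sub_smul_mem_of_closure_eq_top hg (N := (Submodule.span R S).toAddSubgroup)
      (fun j ↦ sub_smul_mem_of_span_eq_top hm fun i ↦ ?_) s u
    exact Submodule.subset_span ⟨i, j, Or.inl rfl⟩
  rw [Submodule.span_eq_restrictScalars_span_of_smul_mem T_smul_mem,
    Submodule.coe_restrictScalars]
  exact congrArg _
    ((Submodule.span_mono S_subset_T).antisymm (Submodule.span_le.2 T_subset_span_S))

/-- Let `M` be a module over a `k`-algebra `R` and let a finite group `G` act on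
`M` by `R`-module automorphisms.  Write `M_G = M/N` where
`N = span_k {m - g • m : g ∈ G, m ∈ M}`.  If `{m_i : i ∈ I}` generates `M` as an `R`-module
and `{g_j : j ∈ J}` generates `G`, then
`{m_i - g_j • m_i, m_i - g_j⁻¹ • m_i : i ∈ I, j ∈ J}` generates `N` as an `R`-module. -/
theorem cofixed_relations_generators
    (k : Type*) [CommRing k] (R : Type*) [CommRing R] [Algebra k R]
    (M : Type*) [AddCommGroup M] [Module k M] [Module R M] [IsScalarTower k R M]
    (G : Type*) [Group G] [Finite G] [DistribMulAction G M]
    [SMulCommClass G k M] [SMulCommClass G R M]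
    {I J : Type*} (m : I → M) (g : J → G)
    (hm : Submodule.span R (Set.range m) = ⊤)
    (hg : Subgroup.closure (Set.range g) = ⊤) :
    (Submodule.span R
        {x : M | ∃ i j, x = m i - g j • m i ∨ x = m i - (g j)⁻¹ • m i} : Set M) =
    (Submodule.span k {x : M | ∃ (u : M) (s : G), x = u - s • u} : Set M) :=
  cofixed_relations_generators_general k R M G m g hm hg
end

section
/- For V = F_3[x,y] with the GL_2(F_3)-action induced from the standard representation, the cofixed space of the degree-4 homogeneous component V_4 is a 1-dimensional F_3-vector space, spanned by the image of x²y². -/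
/-!
The functional `p ↦ ∑_{w ∈ F₃²} p(w)` is `GL₂(F₃)`-invariant, because `g` permutes the points
of `F₃²`, so it vanishes on every `v - g v`; it takes the value `(∑ a²)² = 1` on `x²y²`, so the
image of `x²y²` in the cofixed space is nonzero. Conversely the other four monomials of degree 4
die there: `x ↦ -x` multiplies `x³y` and `xy³` by `-1`, so `v - g v = 2v` for them, and
`x ↦ x + y` sends `x³y` to `x³y + y⁴` (the Frobenius `(x + y)³ = x³ + y³`), symmetrically
for `x⁴`.
-/

open MvPolynomial

/-- The action of `g ∈ GL₂(F₃)` on `F₃[x,y]` by linear substitution of the variables. -/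
noncomputable def glAction (g : GL (Fin 2) (ZMod 3)) :
    MvPolynomial (Fin 2) (ZMod 3) →ₐ[ZMod 3] MvPolynomial (Fin 2) (ZMod 3) :=
  aeval (fun i => ∑ j : Fin 2, C ((g : Matrix (Fin 2) (Fin 2) (ZMod 3)) i j) * X j)

/-- The monomial `x²y²`, as an element of the degree-4 homogeneous component of `F₃[x,y]`. -/
noncomputable def x2y2 : (homogeneousSubmodule (Fin 2) (ZMod 3) 4) :=
  ⟨X 0 ^ 2 * X 1 ^ 2, by
    rw [mem_homogeneousSubmodule]
    simpa using ((isHomogeneous_X (ZMod 3) (0 : Fin 2)).pow 2).mul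
      ((isHomogeneous_X (ZMod 3) (1 : Fin 2)).pow 2)⟩

theorem aeval_aeval_linear {σ R : Type*} [Fintype σ] [CommSemiring R] (M : Matrix σ σ R)
    (w : σ → R) (p : MvPolynomial σ R) :
    aeval w (aeval (fun i => ∑ j, C (M i j) * X j) p) = aeval (M.mulVec w) p := by
  rw [comp_aeval_apply]
  congr
  funext i
  simp [Matrix.mulVec, dotProduct]

section SumEval

variable {σ R : Type*} [Fintype σ] [DecidableEq σ] [CommRing R] [Fintype R]

noncomputable def sumEval : MvPolynomial σ R →ₗ[R] R :=
  ∑ w : σ → R, (aeval w).toLinearMap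

theorem sumEval_apply (p : MvPolynomial σ R) : sumEval p = ∑ w : σ → R, aeval w p := by
  simp [sumEval]

theorem sumEval_aeval_linear (g : GL σ R) (p : MvPolynomial σ R) :
    sumEval (aeval (fun i => ∑ j, C ((g : Matrix σ σ R) i j) * X j) p) = sumEval p := by
  simp only [sumEval_apply, aeval_aeval_linear]
  exact (Matrix.mulVec_surjective_iff_isUnit.2 g.isUnit).bijective_of_finite.sum_comp
    (fun w => aeval w p)

end SumEval

theorem glAction_mem_homogeneousSubmodule (g : GL (Fin 2) (ZMod 3)) {n : ℕ}
    {p : MvPolynomial (Fin 2) (ZMod 3)} (hp : p ∈ homogeneousSubmodule (Fin 2) (ZMod 3) n) :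
    glAction g p ∈ homogeneousSubmodule (Fin 2) (ZMod 3) n := by
  have : (glAction g p).IsHomogeneous (1 * n) :=
    hp.aeval _ fun i => IsHomogeneous.sum _ _ 1 fun j _ => isHomogeneous_C_mul_X _ j
  rwa [one_mul] at this

noncomputable def cofixedKernel (n : ℕ) :
    Submodule (ZMod 3) (homogeneousSubmodule (Fin 2) (ZMod 3) n) :=
  Submodule.span (ZMod 3)
    {x | ∃ (v : homogeneousSubmodule (Fin 2) (ZMod 3) n) (g : GL (Fin 2) (ZMod 3)),
      (x : MvPolynomial (Fin 2) (ZMod 3)) = (v : MvPolynomial (Fin 2) (ZMod 3)) -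
        glAction g (v : MvPolynomial (Fin 2) (ZMod 3))}

theorem cofixedKernel_le_ker_sumEval (n : ℕ) :
    cofixedKernel n ≤
      LinearMap.ker (sumEval ∘ₗ (homogeneousSubmodule (Fin 2) (ZMod 3) n).subtype) := by
  rw [cofixedKernel, Submodule.span_le]
  rintro x ⟨v, g, hx⟩
  simp only [SetLike.mem_coe, LinearMap.mem_ker, LinearMap.comp_apply, Submodule.subtype_apply,
    hx, map_sub, glAction, sumEval_aeval_linear, sub_self]

theorem sumEval_x2y2 : sumEval (x2y2 : MvPolynomial (Fin 2) (ZMod 3)) = 1 := by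
  simp only [x2y2, sumEval_apply, aeval_eq_eval, map_mul, map_pow, eval_X]
  decide

theorem x2y2_notMem_cofixedKernel : x2y2 ∉ cofixedKernel 4 := fun h => by
  simpa [sumEval_x2y2] using cofixedKernel_le_ker_sumEval 4 h

theorem sub_glAction_mem_map_cofixedKernel {n : ℕ} {p : MvPolynomial (Fin 2) (ZMod 3)}
    (hp : p ∈ homogeneousSubmodule (Fin 2) (ZMod 3) n) (g : GL (Fin 2) (ZMod 3)) :
    p - glAction g p ∈ (cofixedKernel n).map (homogeneousSubmodule (Fin 2) (ZMod 3) n).subtype :=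
  ⟨⟨p - glAction g p, sub_mem hp (glAction_mem_homogeneousSubmodule g hp)⟩,
    Submodule.subset_span ⟨⟨p, hp⟩, g, rfl⟩, rfl⟩

def negFirst : GL (Fin 2) (ZMod 3) := ⟨!![-1, 0; 0, 1], !![-1, 0; 0, 1], by decide, by decide⟩

def addSecondToFirst : GL (Fin 2) (ZMod 3) :=
  ⟨!![1, 1; 0, 1], !![1, 2; 0, 1], by decide, by decide⟩

def addFirstToSecond : GL (Fin 2) (ZMod 3) :=
  ⟨!![1, 0; 1, 1], !![1, 0; 2, 1], by decide, by decide⟩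

theorem glAction_negFirst (a b : ℕ) :
    glAction negFirst (X 0 ^ a * X 1 ^ b) = (-X 0) ^ a * X 1 ^ b := by
  simp [glAction, negFirst, Fin.sum_univ_two]

theorem glAction_addSecondToFirst (a b : ℕ) :
    glAction addSecondToFirst (X 0 ^ a * X 1 ^ b) = (X 0 + X 1) ^ a * X 1 ^ b := by
  simp [glAction, addSecondToFirst, Fin.sum_univ_two]

theorem glAction_addFirstToSecond (a b : ℕ) :
    glAction addFirstToSecond (X 0 ^ a * X 1 ^ b) = X 0 ^ a * (X 0 + X 1) ^ b := by
  simp [glAction, addFirstToSecond, Fin.sum_univ_two]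

theorem X_pow_mul_X_pow_mem_homogeneousSubmodule (a b : ℕ) :
    (X 0 ^ a * X 1 ^ b : MvPolynomial (Fin 2) (ZMod 3)) ∈
      homogeneousSubmodule (Fin 2) (ZMod 3) (a + b) :=
  (isHomogeneous_X_pow (0 : Fin 2) a).mul (isHomogeneous_X_pow 1 b)

theorem X_pow_mul_X_pow_mem_of_odd {a : ℕ} (ha : Odd a) (b : ℕ) :
    X 0 ^ a * X 1 ^ b ∈
      (cofixedKernel (a + b)).map (homogeneousSubmodule (Fin 2) (ZMod 3) (a + b)).subtype := by
  have h := sub_glAction_mem_map_cofixedKernel (X_pow_mul_X_pow_mem_homogeneousSubmodule a b)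
    negFirst
  rw [glAction_negFirst, ha.neg_pow, neg_mul, sub_neg_eq_add, ← two_smul (ZMod 3)] at h
  exact (Submodule.smul_mem_iff _ (by decide)).1 h

theorem X_one_pow_four_mem :
    X 1 ^ 4 ∈ (cofixedKernel 4).map (homogeneousSubmodule (Fin 2) (ZMod 3) 4).subtype := by
  have h := sub_glAction_mem_map_cofixedKernel (X_pow_mul_X_pow_mem_homogeneousSubmodule 3 1)
    addSecondToFirst
  rw [glAction_addSecondToFirst, add_pow_char] at h
  have : (X 1 ^ 4 : MvPolynomial (Fin 2) (ZMod 3)) =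
      -(X 0 ^ 3 * X 1 ^ 1 - (X 0 ^ 3 + X 1 ^ 3) * X 1 ^ 1) := by ring
  exact this ▸ neg_mem h

theorem X_zero_pow_four_mem :
    X 0 ^ 4 ∈ (cofixedKernel 4).map (homogeneousSubmodule (Fin 2) (ZMod 3) 4).subtype := by
  have h := sub_glAction_mem_map_cofixedKernel (X_pow_mul_X_pow_mem_homogeneousSubmodule 1 3)
    addFirstToSecond
  rw [glAction_addFirstToSecond, add_pow_char] at h
  have : (X 0 ^ 4 : MvPolynomial (Fin 2) (ZMod 3)) =
      -(X 0 ^ 1 * X 1 ^ 3 - X 0 ^ 1 * (X 0 ^ 3 + X 1 ^ 3)) := by ring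
  exact this ▸ neg_mem h

theorem X_pow_mul_X_pow_mem_span_x2y2_sup {a b : ℕ} (hab : a + b = 4) :
    X 0 ^ a * X 1 ^ b ∈ Submodule.span (ZMod 3) {X 0 ^ 2 * X 1 ^ 2} ⊔
      (cofixedKernel 4).map (homogeneousSubmodule (Fin 2) (ZMod 3) 4).subtype := by
  have ha : a ≤ 4 := by omega
  obtain rfl : b = 4 - a := by omega
  interval_cases a
  · simpa using Submodule.mem_sup_right X_one_pow_four_mem
  · exact Submodule.mem_sup_right (X_pow_mul_X_pow_mem_of_odd (by decide) 3)
  · exact Submodule.mem_sup_left (Submodule.mem_span_singleton_self _)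
  · exact Submodule.mem_sup_right (X_pow_mul_X_pow_mem_of_odd (by decide) 1)
  · simpa using Submodule.mem_sup_right X_zero_pow_four_mem

theorem homogeneousSubmodule_four_le :
    homogeneousSubmodule (Fin 2) (ZMod 3) 4 ≤ Submodule.span (ZMod 3) {X 0 ^ 2 * X 1 ^ 2} ⊔
      (cofixedKernel 4).map (homogeneousSubmodule (Fin 2) (ZMod 3) 4).subtype := by
  intro p hp
  rw [homogeneousSubmodule_eq_finsupp_supported, AddMonoidAlgebra.supported_eq_span_single] at hp
  refine Submodule.span_le.2 ?_ hp
  rintro _ ⟨d, hd, rfl⟩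
  have hmono : AddMonoidAlgebra.single d 1 =
      (X 0 ^ d 0 * X 1 ^ d 1 : MvPolynomial (Fin 2) (ZMod 3)) := by
    rw [single_eq_monomial, monomial_eq, C_1, one_mul, Finsupp.prod_fintype _ _ (by simp),
      Fin.prod_univ_two]
  change AddMonoidAlgebra.single d 1 ∈ _
  rw [hmono]
  exact X_pow_mul_X_pow_mem_span_x2y2_sup (by simpa [Finsupp.degree_eq_sum] using hd)

theorem span_x2y2_sup_cofixedKernel_eq_top :
    Submodule.span (ZMod 3) {x2y2} ⊔ cofixedKernel 4 = ⊤ := by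
  rw [eq_top_iff, ← Submodule.map_le_map_iff_of_injective (Submodule.injective_subtype _),
    Submodule.map_subtype_top, Submodule.map_sup, Submodule.map_span, Set.image_singleton]
  exact homogeneousSubmodule_four_le

theorem span_mk_x2y2_eq_top :
    Submodule.span (ZMod 3) {(Submodule.Quotient.mk x2y2 :
      homogeneousSubmodule (Fin 2) (ZMod 3) 4 ⧸ cofixedKernel 4)} = ⊤ := by
  rw [← Submodule.mkQ_apply, ← Set.image_singleton, ← Submodule.map_span,
    Submodule.map_mkQ_eq_top, sup_comm, span_x2y2_sup_cofixedKernel_eq_top]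

/-- For `V = F₃[x,y]` with the `GL₂(F₃)`-action, the cofixed space of the
degree-4 homogeneous component `V₄` (the quotient of `V₄` by the span of all `v - g(v)`)
is a 1-dimensional `F₃`-vector space, spanned by the image of `x²y²`. -/
theorem cofixed_space_degree_four_GL2_F3
    (N : Submodule (ZMod 3) (homogeneousSubmodule (Fin 2) (ZMod 3) 4))
    (hN : N = Submodule.span (ZMod 3)
        {x : (homogeneousSubmodule (Fin 2) (ZMod 3) 4) | ∃ (v : homogeneousSubmodule (Fin 2) (ZMod 3) 4) (g : GL (Fin 2) (ZMod 3)),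
          (x : MvPolynomial (Fin 2) (ZMod 3)) = (v : MvPolynomial (Fin 2) (ZMod 3)) -
            glAction g (v : MvPolynomial (Fin 2) (ZMod 3))}) :
    Module.finrank (ZMod 3) ((homogeneousSubmodule (Fin 2) (ZMod 3) 4) ⧸ N) = 1 ∧
    Submodule.span (ZMod 3) {(Submodule.Quotient.mk x2y2 :
        (homogeneousSubmodule (Fin 2) (ZMod 3) 4) ⧸ N)} = ⊤ := by
  subst hN
  have hne : (Submodule.Quotient.mk x2y2 : _ ⧸ cofixedKernel 4) ≠ 0 :=
    mt (Submodule.Quotient.mk_eq_zero _).1 x2y2_notMem_cofixedKernel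
  exact ⟨(finrank_eq_one_iff_of_nonzero _ hne).2 span_mk_x2y2_eq_top, span_mk_x2y2_eq_top⟩
end

section
/- Let p be prime and n an integer with p ≤ n < 2p. For the S_n-action on ℤ_(p)[x_1,…,x_n] by permuting variables, Tr(x_1⋯x_j) = j!(n−j)! e_j; consequently e_j lies in the image of the transfer map whenever both j ≤ p−1 and n − j ≤ p−1. -/
open MvPolynomial

/-- The prime ideal `(p)` of `ℤ`. -/
abbrev pIdeal (p : ℕ) : Ideal ℤ := Ideal.span {(p : ℤ)}

instance pIdeal_isPrime (p : ℕ) [hp : Fact p.Prime] : (pIdeal p).IsPrime :=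
  (Ideal.span_singleton_prime (by exact_mod_cast hp.out.ne_zero)).mpr
    (Nat.prime_iff_prime_int.mp hp.out)

/-- `ℤ_(p)`, the localization of `ℤ` at the prime `p`. -/
abbrev Zp (p : ℕ) [Fact p.Prime] : Type := Localization.AtPrime (pIdeal p)

/-!
`S_n` acts transitively on the `j`-element subsets of the variables, and the stabiliser of one of
them is `S_j × S_{n-j}`. Hence `Tr(x_1⋯x_j)` is `j!(n-j)!` times the sum of all squarefree
monomials of degree `j`, which is `j!(n-j)! e_j`. When `j, n - j < p` that coefficient is prime to
`p`, hence a unit of `ℤ_(p)`, and `e_j = Tr(x_1⋯x_j / (j!(n-j)!))`.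
-/

open Finset Equiv
open scoped Pointwise Nat

namespace Equiv.Perm
variable {α : Type*} [DecidableEq α]

theorem exists_smul_finset_eq {s t : Finset α} (h : #s = #t) : ∃ τ : Perm α, τ • s = t := by
  obtain ⟨τ, hτ⟩ := (Set.powersetCard.isPretransitive (α := α) (n := #s)).exists_smul_eq
    ⟨s, rfl⟩ ⟨t, h.symm⟩
  exact ⟨τ, congrArg Subtype.val hτ⟩

variable [Fintype α]

theorem card_filter_smul_finset_eq_self (s : Finset α) :
    #{σ : Perm α | σ • s = s} = (#s)! * (Fintype.card α - #s)! := by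
  have hiff (σ : Perm α) :
      σ • s = s ↔ (fun a => decide (a ∈ s)) ∘ σ = fun a => decide (a ∈ s) := by
    rw [← MulAction.mem_stabilizer_iff, MulAction.mem_stabilizer_finset, funext_iff]
    simp [Perm.smul_def]
  rw [filter_congr fun σ _ => hiff σ, ← Fintype.card_subtype, DomMulAct.stabilizer_card,
    Fintype.prod_bool]
  simp [Fintype.card_subtype_compl, Fintype.card_coe]

theorem card_filter_smul_finset_eq {s t : Finset α} (h : #s = #t) :
    #{σ : Perm α | σ • s = t} = (#s)! * (Fintype.card α - #s)! := by
  obtain ⟨τ, rfl⟩ := exists_smul_finset_eq h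
  rw [← card_filter_smul_finset_eq_self s]
  refine card_equiv (Equiv.mulLeft τ⁻¹) fun σ => ?_
  simp [mul_smul, inv_smul_eq_iff]

theorem sum_smul_finset {M : Type*} [AddCommMonoid M] (f : Finset α → M) (s : Finset α) :
    ∑ σ : Perm α, f (σ • s) =
      ((#s)! * (Fintype.card α - #s)!) • ∑ t ∈ powersetCard #s univ, f t := by
  rw [← sum_fiberwise_of_maps_to (g := (· • s)) (t := powersetCard #s univ)
    fun σ _ => mem_powersetCard.mpr ⟨subset_univ _, card_smul_finset σ s⟩, smul_sum]
  refine sum_congr rfl fun t ht => ?_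
  rw [sum_congr rfl fun σ hσ => congrArg f (mem_filter.mp hσ).2, sum_const,
    card_filter_smul_finset_eq (mem_powersetCard.mp ht).2.symm]

end Equiv.Perm

namespace MvPolynomial
variable {ι R : Type*} [CommSemiring R] [Fintype ι] [DecidableEq ι]

theorem sum_perm_rename_prod_X (s : Finset ι) :
    ∑ e : Perm ι, rename e (∏ i ∈ s, X i : MvPolynomial ι R) =
      C (((#s)! * (Fintype.card ι - #s)! : ℕ) : R) * esymm ι R #s := by
  have h (e : Perm ι) :
      rename e (∏ i ∈ s, X i : MvPolynomial ι R) = ∏ i ∈ e • s, X i := by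
    rw [map_prod, smul_finset_def, prod_image (MulAction.injective e).injOn]
    simp [Perm.smul_def]
  simp_rw [h]
  rw [Perm.sum_smul_finset (fun t => ∏ i ∈ t, (X i : MvPolynomial ι R)), ← esymm,
    nsmul_eq_mul, C_eq_coe_nat]

end MvPolynomial

theorem Zp.isUnit_natCast {p : ℕ} [Fact p.Prime] {m : ℕ} (h : ¬p ∣ m) :
    IsUnit (m : Zp p) := by
  rw [← map_natCast (algebraMap ℤ (Zp p)),
    IsLocalization.AtPrime.isUnit_to_map_iff (Zp p) (pIdeal p)]
  simpa [Ideal.mem_span_singleton, Int.natCast_dvd_natCast] using h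

theorem transfer_of_squarefree_monomial_general (p : ℕ) [Fact p.Prime] (n : ℕ)
    (j : ℕ) (hj : j ≤ n) :
    (∑ σ : Equiv.Perm (Fin n),
        rename (⇑σ) (∏ t ∈ Finset.univ.filter (fun t : Fin n => (t : ℕ) < j), X t) =
      C (((j.factorial * (n - j).factorial : ℕ) : Zp p)) * esymm (Fin n) (Zp p) j) ∧
    (j ≤ p - 1 → n - j ≤ p - 1 →
      ∃ f : MvPolynomial (Fin n) (Zp p),
        ∑ σ : Equiv.Perm (Fin n), rename (⇑σ) f = esymm (Fin n) (Zp p) j) := by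
  have htrace := sum_perm_rename_prod_X (R := Zp p) {t : Fin n | (t : ℕ) < j}
  rw [Fin.card_filter_val_lt, min_eq_right hj, Fintype.card_fin] at htrace
  refine ⟨htrace, fun hjp hnjp => ?_⟩
  have hp : p.Prime := Fact.out
  have hp_pos := hp.pos
  have hu : IsUnit ((j ! * (n - j)! : ℕ) : Zp p) := Zp.isUnit_natCast fun hdvd => by
    rcases hp.dvd_mul.mp hdvd with h | h <;> have := hp.dvd_factorial.mp h <;> omega
  refine ⟨(↑hu.unit⁻¹ : Zp p) • ∏ t ∈ {t : Fin n | (t : ℕ) < j}, X t, ?_⟩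
  simp_rw [map_smul]
  rw [← smul_sum, htrace, C_mul', smul_smul, hu.val_inv_mul, one_smul]

/-- Let `p` be prime and `p ≤ n < 2p`.  For the `S_n`-action on
`ℤ_(p)[x_1,…,x_n]` by permuting variables, `Tr(x_1⋯x_j) = j!(n−j)! e_j`; consequently `e_j`
lies in the image of the transfer map whenever both `j ≤ p−1` and `n − j ≤ p−1`. -/
theorem transfer_of_squarefree_monomial (p : ℕ) [Fact p.Prime] (n : ℕ)
    (hn : p ≤ n) (hn' : n < 2 * p) (j : ℕ) (hj : j ≤ n) :
    (∑ σ : Equiv.Perm (Fin n),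
        rename (⇑σ) (∏ t ∈ Finset.univ.filter (fun t : Fin n => (t : ℕ) < j), X t) =
      C (((j.factorial * (n - j).factorial : ℕ) : Zp p)) * esymm (Fin n) (Zp p) j) ∧
    (j ≤ p - 1 → n - j ≤ p - 1 →
      ∃ f : MvPolynomial (Fin n) (Zp p),
        ∑ σ : Equiv.Perm (Fin n), rename (⇑σ) f = esymm (Fin n) (Zp p) j) :=
  transfer_of_squarefree_monomial_general p n j hj
end

section
/- Let p be prime, n = p + i with 1 ≤ i ≤ p − 1, and 1 ≤ j ≤ i. Then the symmetric polynomial e_je_p − e_{p+j} in n variables lies in the image of the transfer map Tr: ℤ_(p)[x_1,…,x_n] → ℤ_(p)[x_1,…,x_n]^{S_n}. In particular, the coefficient of the monomial symmetric polynomial m_{(1^{p+j})} in e_je_p − e_{p+j} is C(p+j, j) − 1, and (C(p+j,j) − 1)/((p+j)!(i−j)!) lies in ℤ_(p). -/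
/-!
Expanding the product, `e_j e_p = ∑ x^A x^B` over pairs with `#A = j`, `#B = p`; the disjoint
pairs contribute `C(p+j, j) e_{p+j}`, so `e_j e_p - e_{p+j}` is the sum of `x^A x^B` over the
overlapping pairs plus `(C(p+j, j) - 1) e_{p+j}`.

The transfer of one monomial of an `S_n`-invariant sum is the order of its stabilizer times the
sum over its orbit, so `c` times such a sum lies in the image of the transfer as soon as every
stabilizer order divides `c` in `ℤ_(p)`. For an overlapping pair `(A, B)`, an element of order
`p` in the stabilizer would be a `p`-cycle (as `n < 2p`) which must avoid `A` (as `#A < p`) and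
hence either have support `B` or avoid `A ∪ B`; both are impossible, so the stabilizer order is
prime to `p`. For a `(p+j)`-set the stabilizer order divides `n!`, which `p` divides only once,
while `p ∣ C(p+j, j) - 1` by Lucas' theorem.
-/

open MvPolynomial

open Finset Pointwise MulAction

section OrbitSum

variable {G X R M : Type*} [Group G] [Fintype G] [MulAction G X] [DecidableEq X]

lemma card_filter_smul_eq_card_stabilizer (x : X) (g₀ : G) :
    #{g : G | g • x = g₀ • x} = Nat.card (stabilizer G x) := by
  rw [← Fintype.card_subtype, ← Nat.card_eq_fintype_card]
  exact Nat.card_congr <| (Equiv.mulLeft g₀⁻¹).subtypeEquiv fun g => by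
    simp [mul_smul, inv_smul_eq_iff]

variable [AddCommMonoid M]

lemma sum_smul_eq_card_stabilizer_nsmul_sum_orbit (x : X) (F : X → M) :
    ∑ g : G, F (g • x) =
      Nat.card (stabilizer G x) • ∑ y ∈ univ.image (· • x : G → X), F y := by
  rw [sum_comp, smul_sum]
  refine sum_congr rfl fun y hy => ?_
  obtain ⟨g₀, -, rfl⟩ := mem_image.mp hy
  rw [card_filter_smul_eq_card_stabilizer]

variable [CommSemiring R] [Module R M]

theorem smul_sum_mem_range_of_card_stabilizer_dvd (T : M →ₗ[R] M) (F : X → M)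
    (hT : ∀ x, T (F x) = ∑ g : G, F (g • x)) (c : R) (P : Finset X)
    (hP : ∀ g : G, ∀ x ∈ P, g • x ∈ P) (hc : ∀ x ∈ P, (Nat.card (stabilizer G x) : R) ∣ c) :
    c • ∑ x ∈ P, F x ∈ LinearMap.range T := by
  induction P using Finset.strongInduction with
  | H P ih =>
  rcases P.eq_empty_or_nonempty with rfl | ⟨x, hx⟩
  · simp
  set O := univ.image (· • x : G → X)
  have hOP : O ⊆ P := fun y hy => by
    obtain ⟨g, -, rfl⟩ := mem_image.mp hy
    exact hP g x hx
  have hrest : ∀ g : G, ∀ y ∈ P \ O, g • y ∈ P \ O := by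
    intro g y hy
    refine mem_sdiff.mpr ⟨hP g y (mem_sdiff.mp hy).1, fun hgy => (mem_sdiff.mp hy).2 ?_⟩
    obtain ⟨h, -, hh⟩ := mem_image.mp hgy
    exact mem_image.mpr ⟨g⁻¹ * h, mem_univ _, by rw [mul_smul, hh, inv_smul_smul]⟩
  obtain ⟨a, ha⟩ := hc x hx
  rw [← sum_sdiff hOP, smul_add]
  refine add_mem (ih _ (sdiff_ssubset hOP ⟨x, mem_image.mpr ⟨1, mem_univ _, one_smul G x⟩⟩) hrest
    fun y hy => hc y (mem_sdiff.mp hy).1) ⟨a • F x, ?_⟩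
  rw [map_smul, hT, sum_smul_eq_card_stabilizer_nsmul_sum_orbit, ha, mul_comm, mul_smul,
    Nat.cast_smul_eq_nsmul]

end OrbitSum

section Monomials

variable {ι R : Type*} [CommSemiring R]

lemma prod_X_eq_monomial (S : Finset ι) :
    ∏ a ∈ S, (X a : MvPolynomial ι R) = monomial (∑ a ∈ S, Finsupp.single a 1) 1 :=
  (monomial_sum_one S _).symm

variable [DecidableEq ι]

lemma sum_single_one_apply (S : Finset ι) (t : ι) :
    (∑ a ∈ S, Finsupp.single a 1) t = if t ∈ S then 1 else 0 := by
  simp [Finsupp.finsetSum_apply, Finsupp.single_apply]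

lemma sum_single_one_injective :
    Function.Injective (fun S : Finset ι => ∑ a ∈ S, Finsupp.single a 1) := by
  intro S T h
  ext t
  have := DFunLike.congr_fun h t
  simp only [sum_single_one_apply] at this
  split_ifs at this <;> simp_all

lemma coeff_sum_single_one_prod_X (S T : Finset ι) :
    coeff (∑ t ∈ T, Finsupp.single t 1) (∏ a ∈ S, (X a : MvPolynomial ι R)) =
      if S = T then 1 else 0 := by
  rw [prod_X_eq_monomial, coeff_monomial]
  exact if_congr sum_single_one_injective.eq_iff rfl rfl

lemma coeff_sum_single_one_prod_X_mul_prod_X {A B : Finset ι} (T : Finset ι)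
    (hAB : ¬ Disjoint A B) :
    coeff (∑ t ∈ T, Finsupp.single t 1)
      ((∏ a ∈ A, (X a : MvPolynomial ι R)) * ∏ b ∈ B, X b) = 0 := by
  rw [prod_X_eq_monomial, prod_X_eq_monomial, monomial_mul, mul_one, coeff_monomial, if_neg]
  intro h
  obtain ⟨a, haA, haB⟩ := not_disjoint_iff.mp hAB
  have := DFunLike.congr_fun h a
  simp only [Finsupp.add_apply, sum_single_one_apply, if_pos haA, if_pos haB] at this
  split_ifs at this
  omega

lemma rename_prod_X (σ : Equiv.Perm ι) (S : Finset ι) :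
    rename σ (∏ a ∈ S, (X a : MvPolynomial ι R)) = ∏ a ∈ σ • S, X a := by
  rw [map_prod, smul_finset_def, prod_image (MulAction.injective σ).injOn]
  simp [Equiv.Perm.smul_def]

end Monomials

section Transfer

variable (ι R : Type*) [Fintype ι] [DecidableEq ι] [CommSemiring R]

noncomputable def transfer : MvPolynomial ι R →ₗ[R] MvPolynomial ι R :=
  ∑ σ : Equiv.Perm ι, (rename σ).toLinearMap

variable {ι R}

lemma transfer_apply (f : MvPolynomial ι R) :
    transfer ι R f = ∑ σ : Equiv.Perm ι, rename σ f := by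
  simp [transfer]

lemma transfer_prod_X (S : Finset ι) :
    transfer ι R (∏ a ∈ S, X a) = ∑ σ : Equiv.Perm ι, ∏ a ∈ σ • S, X a := by
  simp only [transfer_apply, rename_prod_X]

lemma transfer_prod_X_mul_prod_X (x : Finset ι × Finset ι) :
    transfer ι R ((∏ a ∈ x.1, X a) * ∏ b ∈ x.2, X b) =
      ∑ σ : Equiv.Perm ι, (∏ a ∈ (σ • x).1, X a) * ∏ b ∈ (σ • x).2, X b := by
  simp only [transfer_apply, map_mul, rename_prod_X, Prod.smul_fst, Prod.smul_snd]

end Transfer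
section Esymm

variable {ι : Type*} [Fintype ι] [DecidableEq ι]

def disjointPairs (j k : ℕ) : Finset (Finset ι × Finset ι) :=
  {x ∈ powersetCard j univ ×ˢ powersetCard k univ | Disjoint x.1 x.2}

def overlappingPairs (j k : ℕ) : Finset (Finset ι × Finset ι) :=
  {x ∈ powersetCard j univ ×ˢ powersetCard k univ | ¬ Disjoint x.1 x.2}

lemma mem_disjointPairs {j k : ℕ} {x : Finset ι × Finset ι} :
    x ∈ disjointPairs j k ↔ #x.1 = j ∧ #x.2 = k ∧ Disjoint x.1 x.2 := by
  simp [disjointPairs, and_assoc]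

lemma mem_overlappingPairs {j k : ℕ} {x : Finset ι × Finset ι} :
    x ∈ overlappingPairs j k ↔ #x.1 = j ∧ #x.2 = k ∧ ¬ Disjoint x.1 x.2 := by
  simp [overlappingPairs, and_assoc]

lemma smul_mem_overlappingPairs {G : Type*} [Group G] [MulAction G ι] (g : G) {j k : ℕ}
    {x : Finset ι × Finset ι} (hx : x ∈ overlappingPairs j k) : g • x ∈ overlappingPairs j k := by
  obtain ⟨h1, h2, h3⟩ := mem_overlappingPairs.mp hx
  refine mem_overlappingPairs.mpr ⟨by simpa using h1, by simpa using h2, ?_⟩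
  rwa [Prod.smul_fst, Prod.smul_snd, disjoint_iff_inter_eq_empty, ← smul_finset_inter,
    smul_finset_eq_empty, ← disjoint_iff_inter_eq_empty]

lemma smul_mem_powersetCard_univ {G : Type*} [Group G] [MulAction G ι] (g : G) {k : ℕ}
    {S : Finset ι} (hS : S ∈ powersetCard k univ) : g • S ∈ powersetCard k univ := by
  rwa [mem_powersetCard_univ, card_smul_finset, ← mem_powersetCard_univ]

variable {R : Type*} [CommSemiring R]

lemma sum_disjointPairs_prod_X_mul_prod_X (j k : ℕ) :
    ∑ x ∈ disjointPairs j k, (∏ a ∈ x.1, (X a : MvPolynomial ι R)) * ∏ b ∈ x.2, X b =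
      (j + k).choose j • esymm ι R (j + k) := by
  rw [esymm, smul_sum]
  have hsplit : ∀ S ∈ powersetCard (j + k) (univ : Finset ι),
      (j + k).choose j • ∏ a ∈ S, (X a : MvPolynomial ι R) =
        ∑ A ∈ powersetCard j S, (∏ a ∈ A, X a) * ∏ b ∈ S \ A, X b := by
    intro S hS
    rw [mem_powersetCard_univ] at hS
    rw [← hS, ← card_powersetCard, ← sum_const]
    refine sum_congr rfl fun A hA => ?_
    rw [mul_comm, prod_sdiff (mem_powersetCard.mp hA).1]
  rw [sum_congr rfl hsplit, sum_sigma']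
  refine sum_nbij' (fun x => ⟨x.1 ∪ x.2, x.1⟩) (fun y => (y.2, y.1 \ y.2)) ?_ ?_ ?_ ?_ ?_
  · intro x hx
    obtain ⟨h1, h2, h3⟩ := mem_disjointPairs.mp hx
    rw [mem_sigma, mem_powersetCard_univ, mem_powersetCard]
    exact ⟨by rw [card_union_of_disjoint h3, h1, h2], subset_union_left, h1⟩
  · intro y hy
    rw [mem_sigma, mem_powersetCard_univ, mem_powersetCard] at hy
    refine mem_disjointPairs.mpr ⟨hy.2.2, ?_, disjoint_sdiff⟩
    rw [card_sdiff_of_subset hy.2.1, hy.1, hy.2.2]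
    omega
  · intro x hx
    obtain ⟨-, -, h3⟩ := mem_disjointPairs.mp hx
    simp [union_sdiff_cancel_left h3]
  · intro y hy
    simp only [mem_sigma, mem_powersetCard] at hy
    simp [union_sdiff_of_subset hy.2.1]
  · intro x hx
    obtain ⟨-, -, h3⟩ := mem_disjointPairs.mp hx
    simp [union_sdiff_cancel_left h3]

lemma esymm_mul_esymm (j k : ℕ) :
    esymm ι R j * esymm ι R k =
      ∑ x ∈ overlappingPairs j k, (∏ a ∈ x.1, (X a : MvPolynomial ι R)) * ∏ b ∈ x.2, X b +
        (j + k).choose j • esymm ι R (j + k) := by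
  rw [← sum_disjointPairs_prod_X_mul_prod_X, esymm, esymm, sum_mul_sum, ← sum_product',
    overlappingPairs, disjointPairs, add_comm, sum_filter_add_sum_filter_not]

lemma coeff_sum_single_one_esymm (T : Finset ι) (k : ℕ) :
    coeff (∑ t ∈ T, Finsupp.single t 1) (esymm ι R k) = if #T = k then 1 else 0 := by
  simp only [esymm, coeff_sum, coeff_sum_single_one_prod_X, sum_ite_eq', mem_powersetCard_univ]

end Esymm

section Cycle

variable {α : Type*} [Fintype α] [DecidableEq α]

lemma Equiv.Perm.IsCycle.support_subset_of_smul_eq {σ : Equiv.Perm α} (hσ : σ.IsCycle)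
    {C : Finset α} (hC : σ • C = C) (hmeet : ¬ _root_.Disjoint C σ.support) : σ.support ⊆ C := by
  obtain ⟨a, haC, ha⟩ := not_disjoint_iff.mp hmeet
  intro b hb
  obtain ⟨n, rfl⟩ := hσ.exists_pow_eq (mem_support.mp ha) (mem_support.mp hb)
  have hCn : (σ ^ n) • C = C := (pow_mem (mem_stabilizer_iff.mpr hC) n : σ ^ n ∈ stabilizer _ C)
  exact hCn ▸ smul_mem_smul_finset haC

lemma orderOf_ne_of_smul_eq {p : ℕ} (hp : p.Prime) (hα : Fintype.card α < 2 * p)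
    {A B : Finset α} (hA : #A < p) (hB : #B = p) (hAB : ¬ Disjoint A B) {σ : Equiv.Perm α}
    (hσA : σ • A = A) (hσB : σ • B = B) : orderOf σ ≠ p := by
  intro hord
  have hcyc : σ.IsCycle := Equiv.Perm.isCycle_of_prime_order' (hord ▸ hp) (hord ▸ hα)
  have hsupp : #σ.support = p := hcyc.orderOf.symm.trans hord
  have hAsupp : Disjoint A σ.support := by
    by_contra h
    have := card_le_card (hcyc.support_subset_of_smul_eq hσA h)
    omega
  by_cases hBsupp : Disjoint B σ.support
  · have hdisj : Disjoint (A ∪ B) σ.support := disjoint_union_left.mpr ⟨hAsupp, hBsupp⟩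
    have h1 := card_le_univ (A ∪ B ∪ σ.support)
    have h2 := card_le_card (subset_union_right : B ⊆ A ∪ B)
    rw [card_union_of_disjoint hdisj] at h1
    omega
  · have hBeq : σ.support = B :=
      eq_of_subset_of_card_le (hcyc.support_subset_of_smul_eq hσB hBsupp) (by omega)
    exact hAB (hBeq ▸ hAsupp)

lemma not_dvd_card_stabilizer_of_not_disjoint {p : ℕ} (hp : p.Prime)
    (hα : Fintype.card α < 2 * p) {A B : Finset α} (hA : #A < p) (hB : #B = p)
    (hAB : ¬ Disjoint A B) : ¬ p ∣ Nat.card (stabilizer (Equiv.Perm α) (A, B)) := by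
  intro hdvd
  have := Fact.mk hp
  obtain ⟨σ, hσ⟩ := exists_prime_orderOf_dvd_card' p hdvd
  have hσAB : σ.1 • (A, B) = (A, B) := σ.2
  rw [Prod.smul_mk, Prod.mk.injEq] at hσAB
  exact orderOf_ne_of_smul_eq hp hα hA hB hAB hσAB.1 hσAB.2 (by rw [← hσ, Subgroup.orderOf_coe])

end Cycle

lemma Nat.Prime.not_sq_dvd_factorial {p m : ℕ} (hp : p.Prime) (hm : m < 2 * p) :
    ¬ p ^ 2 ∣ m.factorial := by
  rw [hp.pow_dvd_factorial_iff (b := 2) ?_]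
  · simp only [Nat.Ico_succ_singleton, Finset.sum_singleton, pow_one, not_le]
    exact Nat.div_lt_of_lt_mul (by linarith)
  · rcases m.eq_zero_or_pos with rfl | hm0
    · simp
    · exact Nat.log_lt_of_lt_pow hm0.ne' (by nlinarith [hp.two_le])

section Zp

variable {p : ℕ} [Fact p.Prime]

lemma isUnit_natCast_Zp {m : ℕ} (hm : ¬ p ∣ m) : IsUnit (m : Zp p) := by
  have h := (IsLocalization.AtPrime.isUnit_to_map_iff (Zp p) (pIdeal p) m).mpr fun hmem => by
    rw [SetLike.mem_coe, Ideal.mem_span_singleton] at hmem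
    exact hm (by exact_mod_cast hmem)
  rwa [map_natCast] at h

lemma natCast_dvd_of_not_sq_dvd {d : ℕ} (hd : ¬ p ^ 2 ∣ d) {z : Zp p} (hz : (p : Zp p) ∣ z) :
    (d : Zp p) ∣ z := by
  by_cases hpd : p ∣ d
  · obtain ⟨m, rfl⟩ := hpd
    have hm : ¬ p ∣ m := fun ⟨k, hk⟩ => hd ⟨k, by rw [hk]; ring⟩
    rwa [Nat.cast_mul, (isUnit_natCast_Zp hm).mul_right_dvd]
  · exact (isUnit_natCast_Zp hpd).dvd

lemma natCast_dvd_choose_add_sub_one {j : ℕ} (hj : j < p) :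
    (p : Zp p) ∣ (((p + j).choose j : ℕ) : Zp p) - 1 := by
  have hmod : ((p + j).choose j : ℤ) ≡ 1 [ZMOD p] := by
    have := Choose.choose_modEq_choose_mod_mul_choose_div (n := p + j) (k := j) (p := p)
    rwa [Nat.add_mod_left, Nat.mod_eq_of_lt hj, Nat.choose_self,
      Nat.add_div_left _ (Fact.out : p.Prime).pos, Nat.div_eq_of_lt hj, Nat.choose_zero_right,
      Nat.cast_one, one_mul] at this
  simpa using map_dvd (Int.castRingHom (Zp p)) hmod.symm.dvd

lemma natCast_dvd_choose_add_sub_one_of_dvd_factorial {i j d : ℕ} (hi : i < p) (hj : j < p)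
    (hd : d ∣ (p + i).factorial) : (d : Zp p) ∣ (((p + j).choose j : ℕ) : Zp p) - 1 :=
  natCast_dvd_of_not_sq_dvd
    (fun h => (Fact.out : p.Prime).not_sq_dvd_factorial (by omega) (h.trans hd))
    (natCast_dvd_choose_add_sub_one hj)

end Zp

section TransferImage

variable {ι R : Type*} [Fintype ι] [DecidableEq ι]

lemma smul_esymm_mem_range_transfer [CommSemiring R] {c : R}
    (hc : ∀ d, d ∣ (Fintype.card ι).factorial → (d : R) ∣ c) (k : ℕ) :
    c • esymm ι R k ∈ LinearMap.range (transfer ι R) := by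
  refine smul_sum_mem_range_of_card_stabilizer_dvd (transfer ι R) (fun S => ∏ a ∈ S, X a)
    transfer_prod_X c _ (fun g S hS => smul_mem_powersetCard_univ g hS) fun S _ => hc _ ?_
  have h := Subgroup.card_subgroup_dvd_card (stabilizer (Equiv.Perm ι) S)
  rwa [Nat.card_perm, Nat.card_eq_fintype_card (α := ι)] at h

lemma sum_overlappingPairs_mem_range_transfer {p : ℕ} [Fact p.Prime]
    (hι : Fintype.card ι < 2 * p) {j : ℕ} (hj : j < p) :
    ∑ x ∈ overlappingPairs j p, (∏ a ∈ x.1, X a) * ∏ b ∈ x.2, X b ∈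
      LinearMap.range (transfer ι (Zp p)) := by
  have h := smul_sum_mem_range_of_card_stabilizer_dvd (transfer ι (Zp p))
    (fun x : Finset ι × Finset ι => (∏ a ∈ x.1, X a) * ∏ b ∈ x.2, X b)
    transfer_prod_X_mul_prod_X (1 : Zp p) (overlappingPairs j p)
    (fun g x hx => smul_mem_overlappingPairs g hx) fun x hx => by
      obtain ⟨h1, h2, h3⟩ := mem_overlappingPairs.mp hx
      exact (isUnit_natCast_Zp (not_dvd_card_stabilizer_of_not_disjoint Fact.out hι
        (by omega) h2 h3)).dvd
  rwa [one_smul] at h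

end TransferImage

theorem eje_p_sub_e_pj_in_image_transfer_general (p : ℕ) [Fact p.Prime] (i : ℕ)
    (hi2 : i ≤ p - 1) (j : ℕ) (hj2 : j ≤ i) :
    (∃ f : MvPolynomial (Fin (p + i)) (Zp p),
        ∑ σ : Equiv.Perm (Fin (p + i)), rename (⇑σ) f =
          esymm (Fin (p + i)) (Zp p) j * esymm (Fin (p + i)) (Zp p) p -
            esymm (Fin (p + i)) (Zp p) (p + j)) ∧
    (coeff
        ((Finset.univ.filter (fun t : Fin (p + i) => (t : ℕ) < p + j)).sum
          (fun t => Finsupp.single t 1))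
        (esymm (Fin (p + i)) (Zp p) j * esymm (Fin (p + i)) (Zp p) p -
          esymm (Fin (p + i)) (Zp p) (p + j)) =
      (((p + j).choose j : ℕ) : Zp p) - 1) ∧
    ((((p + j).factorial * (i - j).factorial : ℕ) : Zp p) ∣
      ((((p + j).choose j : ℕ) : Zp p) - 1)) := by
  have hip : i < p := by have := (Fact.out : p.Prime).pos; omega
  have hjp : j < p := by omega
  have hdecomp : esymm (Fin (p + i)) (Zp p) j * esymm (Fin (p + i)) (Zp p) p -
      esymm (Fin (p + i)) (Zp p) (p + j) =
        ∑ x ∈ overlappingPairs j p, (∏ a ∈ x.1, X a) * ∏ b ∈ x.2, X b +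
          ((((p + j).choose j : ℕ) : Zp p) - 1) • esymm (Fin (p + i)) (Zp p) (p + j) := by
    rw [esymm_mul_esymm, add_comm j p, ← Nat.cast_smul_eq_nsmul (Zp p), sub_smul, one_smul]
    abel
  refine ⟨?_, ?_, ?_⟩
  · simp only [← transfer_apply, ← LinearMap.mem_range, hdecomp]
    refine add_mem (sum_overlappingPairs_mem_range_transfer (by simp; omega) hjp)
      (smul_esymm_mem_range_transfer (fun d hd => ?_) _)
    rw [Fintype.card_fin] at hd
    exact natCast_dvd_choose_add_sub_one_of_dvd_factorial hip hjp hd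
  · rw [hdecomp, coeff_add, coeff_sum, coeff_smul, coeff_sum_single_one_esymm,
      sum_eq_zero fun x hx => coeff_sum_single_one_prod_X_mul_prod_X _
        (mem_overlappingPairs.mp hx).2.2]
    simp [Fin.card_filter_val_lt, hj2]
  · exact natCast_dvd_choose_add_sub_one_of_dvd_factorial hip hjp
      (by simpa [Nat.add_sub_cancel' hj2, add_assoc] using
        Nat.factorial_mul_factorial_dvd_factorial_add (p + j) (i - j))

/-- Let `p` be prime, `n = p + i` with `1 ≤ i ≤ p − 1`, and `1 ≤ j ≤ i`.
Then `e_je_p − e_{p+j}` lies in the image of the transfer map on `ℤ_(p)[x_1,…,x_n]`.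
In particular, the coefficient of the monomial symmetric polynomial `m_{(1^{p+j})}`
(i.e. the coefficient of the squarefree monomial `x_1⋯x_{p+j}`) in `e_je_p − e_{p+j}` is
`C(p+j, j) − 1`, and `(C(p+j,j) − 1)/((p+j)!(i−j)!)` lies in `ℤ_(p)`. -/
theorem eje_p_sub_e_pj_in_image_transfer (p : ℕ) [Fact p.Prime] (i : ℕ)
    (hi1 : 1 ≤ i) (hi2 : i ≤ p - 1) (j : ℕ) (hj1 : 1 ≤ j) (hj2 : j ≤ i) :
    (∃ f : MvPolynomial (Fin (p + i)) (Zp p),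
        ∑ σ : Equiv.Perm (Fin (p + i)), rename (⇑σ) f =
          esymm (Fin (p + i)) (Zp p) j * esymm (Fin (p + i)) (Zp p) p -
            esymm (Fin (p + i)) (Zp p) (p + j)) ∧
    (coeff
        ((Finset.univ.filter (fun t : Fin (p + i) => (t : ℕ) < p + j)).sum
          (fun t => Finsupp.single t 1))
        (esymm (Fin (p + i)) (Zp p) j * esymm (Fin (p + i)) (Zp p) p -
          esymm (Fin (p + i)) (Zp p) (p + j)) =
      (((p + j).choose j : ℕ) : Zp p) - 1) ∧
    ((((p + j).factorial * (i - j).factorial : ℕ) : Zp p) ∣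
      ((((p + j).choose j : ℕ) : Zp p) - 1)) :=
  eje_p_sub_e_pj_in_image_transfer_general p i hi2 j hj2
end

section
/- Let p be a prime and let n, m be positive integers with kp ≤ n < m < (k+1)p for some positive integer k. Then the p-Sylow subgroups of S_n and S_m are isomorphic; moreover any p-Sylow subgroup of S_n maps onto a p-Sylow subgroup of S_m under the natural inclusion S_n ↪ S_m. -/
/-!
By Legendre's formula the `p`-adic valuation of `n!` is `∑ i ≥ 1, ⌊n / p^i⌋`, which depends on
`n` only through `⌊n / p⌋`; so `n!` and `m!` have the same `p`-part whenever `kp ≤ n ≤ m < (k+1)p`.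
The inclusion `S_n ↪ S_m` is injective, hence maps a Sylow `p`-subgroup of `S_n` to a `p`-subgroup
of `S_m` of the full Sylow order, and all Sylow `p`-subgroups of `S_m` are conjugate.
-/

open Equiv Nat

theorem Nat.factorization_factorial_eq_of_div_eq {p n m : ℕ} (hp : p.Prime) (h : n / p = m / p) :
    (n)!.factorization p = (m)!.factorization p := by
  have hb : ∀ {x}, x ≤ n + m → log p x < log p (n + m) + 1 :=
    fun hx => lt_succ_of_le (log_mono_right hx)
  rw [factorization_factorial hp (hb (le_add_right n m)),
    factorization_factorial hp (hb (le_add_left m n))]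
  refine Finset.sum_congr rfl fun i hi => ?_
  obtain ⟨j, rfl⟩ := Nat.exists_eq_add_of_le' (Finset.mem_Ico.mp hi).1
  rw [pow_succ', ← Nat.div_div_eq_div_mul, ← Nat.div_div_eq_div_mul, h]

namespace Sylow

variable {G H : Type*} [Group G] [Group H] [Finite G] [Finite H] {p : ℕ} [Fact p.Prime]
  {f : G →* H}

noncomputable def mapOfInjective (P : Sylow p G) (hf : Function.Injective f)
    (hcard : (Nat.card H).factorization p = (Nat.card G).factorization p) : Sylow p H :=
  ofCard (P.map f) (by rw [Subgroup.card_map_of_injective hf, hcard, card_eq_multiplicity])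

@[simp]
theorem coe_mapOfInjective (P : Sylow p G) (hf : Function.Injective f)
    (hcard : (Nat.card H).factorization p = (Nat.card G).factorization p) :
    (P.mapOfInjective hf hcard : Subgroup H) = P.map f :=
  rfl

noncomputable def equivMapOfInjective (P : Sylow p G) (hf : Function.Injective f)
    (hcard : (Nat.card H).factorization p = (Nat.card G).factorization p) :
    P ≃* P.mapOfInjective hf hcard :=
  Subgroup.equivMapOfInjective P f hf

end Sylow

theorem sylow_symm_group_stable_general (p : ℕ) [Fact p.Prime] (k n m : ℕ)
    (h1 : k * p ≤ n) (h3 : m < (k + 1) * p) (hnm : n ≤ m) :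
    (∀ (P : Sylow p (Equiv.Perm (Fin n))) (Q : Sylow p (Equiv.Perm (Fin m))),
        Nonempty (P ≃* Q)) ∧
    (∀ P : Sylow p (Equiv.Perm (Fin n)),
        ∃ Q : Sylow p (Equiv.Perm (Fin m)),
          Subgroup.map
            (Equiv.Perm.viaEmbeddingHom (Fin.castLEEmb hnm))
            (P : Subgroup (Equiv.Perm (Fin n))) = (Q : Subgroup (Equiv.Perm (Fin m)))) := by
  have hp : 0 < p := (Fact.out : p.Prime).pos
  have hdiv : m / p = n / p := by
    rw [Nat.div_eq_of_lt_le (by nlinarith) h3, Nat.div_eq_of_lt_le h1 (by nlinarith)]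
  have hcard : (Nat.card (Perm (Fin m))).factorization p =
      (Nat.card (Perm (Fin n))).factorization p := by
    rw [Nat.card_perm, Nat.card_perm, Nat.card_fin, Nat.card_fin]
    exact factorization_factorial_eq_of_div_eq Fact.out hdiv
  have hf := Perm.viaEmbeddingHom_injective (Fin.castLEEmb hnm)
  refine ⟨fun P Q => ?_, fun P =>
    ⟨P.mapOfInjective hf hcard, (P.coe_mapOfInjective hf hcard).symm⟩⟩
  exact ⟨(P.equivMapOfInjective hf hcard).trans ((P.mapOfInjective hf hcard).equiv Q)⟩

/-- Let `p` be a prime and `n, m` positive integers with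
`kp ≤ n < m < (k+1)p` for some positive integer `k`.  Then the `p`-Sylow subgroups of `S_n`
and `S_m` are isomorphic; moreover any `p`-Sylow subgroup of `S_n` maps onto a `p`-Sylow
subgroup of `S_m` under the natural inclusion `S_n ↪ S_m`. -/
theorem sylow_symm_group_stable (p : ℕ) [Fact p.Prime] (k n m : ℕ) (hk : 1 ≤ k)
    (h1 : k * p ≤ n) (h2 : n < m) (h3 : m < (k + 1) * p) (hnm : n ≤ m) :
    (∀ (P : Sylow p (Equiv.Perm (Fin n))) (Q : Sylow p (Equiv.Perm (Fin m))),
        Nonempty (P ≃* Q)) ∧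
    (∀ P : Sylow p (Equiv.Perm (Fin n)),
        ∃ Q : Sylow p (Equiv.Perm (Fin m)),
          Subgroup.map
            (Equiv.Perm.viaEmbeddingHom (Fin.castLEEmb hnm))
            (P : Subgroup (Equiv.Perm (Fin n))) = (Q : Subgroup (Equiv.Perm (Fin m)))) :=
  sylow_symm_group_stable_general p k n m h1 h3 hnm
end
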